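/- Let p be a probability distribution on a finite set X, W a stochastic matrix from X to Y, and 0 < δ < 1/(2|X|). Then for any x ∈ T^n_{p,δ}, the number of sequences y ∈ Yⁿ that are W-generated by x with constant δ satisfies |T^n_{W,δ}(x)| ≤ (n+1)^{|X|} · 2^{n(H(W|p) + φ(|X|,|Y|,δ))}, where φ → 0 as δ → 0. -/

import Mathlib

/-!
Let `V` be `W` mixed with uniform noise of weight `δ`. Since `∏ i, V (x i) (· i)` is a
probability distribution on `Yⁿ`, at most `2 ^ t` sequences `y` have code length
`∑ i, -log₂ V (x i) (y i) ≤ t`. This code length equals `n ∑_c P_{xy}(c) (-log₂ V c)`, and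
the smoothing keeps `0 ≤ -log₂ V ≤ log₂ ((1 + |Y| δ) / δ)`, a bound independent of `W`. So for a
conditionally typical `y`, where `|P_{xy} - p ⊗ W| ≤ 2δ`, the code length is at most
`n (∑ p W (-log₂ V) + 2δ |X| |Y| log₂ ((1 + |Y| δ) / δ))`, and `∑ p W (-log₂ V)` exceeds
`H(W|p)` by at most `log₂ (1 + |Y| δ)`. Both error terms vanish as `δ → 0⁺`.
-/
noncomputable section

/-- The type (empirical distribution) of a sequence. -/
def typeOf {X : Type*} [Fintype X] [DecidableEq X] {n : ℕ} (x : Fin n → X) (a : X) : ℝ :=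
  ((Finset.univ.filter (fun i => x i = a)).card : ℝ) / n

/-- Shannon entropy (base 2) of a distribution on a finite set. -/
def Hd {X : Type*} [Fintype X] (p : X → ℝ) : ℝ := -∑ a, p a * Real.logb 2 (p a)

/-- Conditional entropy H(W|p) = Σ_a p(a) H(W(·|a)). -/
def condH {X Y : Type*} [Fintype X] [Fintype Y] (p : X → ℝ) (W : X → Y → ℝ) : ℝ :=
  ∑ a, p a * (-∑ b, W a b * Real.logb 2 (W a b))

open Real Filter Topology

theorem sum_comp_eq_mul_sum_typeOf {Z : Type*} [Fintype Z] [DecidableEq Z] {n : ℕ}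
    (z : Fin n → Z) (f : Z → ℝ) : ∑ i, f (z i) = n * ∑ c, typeOf z c * f c := by
  rw [← Finset.sum_fiberwise' Finset.univ z f, Finset.mul_sum]
  refine Finset.sum_congr rfl fun c _ => ?_
  rcases n.eq_zero_or_pos with rfl | hn
  · simp
  · rw [Finset.sum_const, nsmul_eq_mul, typeOf]
    field_simp

section Stochastic

variable {X Y : Type*} [Fintype Y]

theorem sum_prod_eq_one_of_stochastic (V : X → Y → ℝ) (hV : ∀ a, ∑ b, V a b = 1) {n : ℕ}
    (x : Fin n → X) : ∑ y : Fin n → Y, ∏ i, V (x i) (y i) = 1 := by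
  rw [← Fintype.prod_sum (fun i b => V (x i) b)]
  simp [hV]

theorem card_le_two_rpow_of_sum_neg_logb_le (V : X → Y → ℝ) (hV0 : ∀ a b, 0 < V a b)
    (hV : ∀ a, ∑ b, V a b = 1) {n : ℕ} (x : Fin n → X) (S : Finset (Fin n → Y)) (t : ℝ)
    (h : ∀ y ∈ S, ∑ i, -logb 2 (V (x i) (y i)) ≤ t) : (S.card : ℝ) ≤ 2 ^ t := by
  have hprob : ∀ y ∈ S, (2 : ℝ) ^ (-t) ≤ ∏ i, V (x i) (y i) := fun y hy => by
    rw [← le_logb_iff_rpow_le one_lt_two (Finset.prod_pos fun i _ => hV0 _ _),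
      logb_prod _ _ fun i _ => (hV0 _ _).ne']
    linarith [h y hy, Finset.sum_neg_distrib (s := Finset.univ)
      (fun i => logb 2 (V (x i) (y i)))]
  have hmass : (S.card : ℝ) * 2 ^ (-t) ≤ 1 :=
    calc (S.card : ℝ) * 2 ^ (-t) = ∑ _y ∈ S, (2 : ℝ) ^ (-t) := by simp
      _ ≤ ∑ y ∈ S, ∏ i, V (x i) (y i) := Finset.sum_le_sum hprob
      _ ≤ ∑ y : Fin n → Y, ∏ i, V (x i) (y i) := Finset.sum_le_sum_of_subset_of_nonneg
          (Finset.subset_univ S) fun y _ _ => Finset.prod_nonneg fun i _ => (hV0 _ _).le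
      _ = 1 := sum_prod_eq_one_of_stochastic V hV x
  rwa [rpow_neg zero_le_two, ← div_eq_mul_inv, div_le_one (by positivity)] at hmass

end Stochastic

section SmoothChannel

variable {X Y : Type*} [Fintype Y]

def smoothChannel (W : X → Y → ℝ) (η : ℝ) (a : X) (b : Y) : ℝ :=
  (W a b + η) / (1 + Fintype.card Y * η)

variable {W : X → Y → ℝ} {η : ℝ}

theorem one_add_card_mul_pos (hη : 0 ≤ η) : 0 < 1 + (Fintype.card Y : ℝ) * η := by
  positivity

theorem smoothChannel_pos (hW0 : ∀ a b, 0 ≤ W a b) (hη : 0 < η) (a : X) (b : Y) :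
    0 < smoothChannel W η a b :=
  div_pos (by linarith [hW0 a b]) (one_add_card_mul_pos hη.le)

theorem sum_smoothChannel (hW1 : ∀ a, ∑ b, W a b = 1) (hη : 0 ≤ η) (a : X) :
    ∑ b, smoothChannel W η a b = 1 := by
  simp only [smoothChannel, ← Finset.sum_div, Finset.sum_add_distrib, hW1, Finset.sum_const,
    Finset.card_univ, nsmul_eq_mul]
  exact div_self (one_add_card_mul_pos hη).ne'

theorem neg_logb_smoothChannel_nonneg (hW0 : ∀ a b, 0 ≤ W a b) (hW1 : ∀ a, ∑ b, W a b = 1)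
    (hη : 0 < η) (a : X) (b : Y) : 0 ≤ -logb 2 (smoothChannel W η a b) := by
  have hWle : W a b ≤ 1 :=
    hW1 a ▸ Finset.single_le_sum (fun b _ => hW0 a b) (Finset.mem_univ b)
  have hY : (1 : ℝ) ≤ Fintype.card Y := by exact_mod_cast Fintype.card_pos_iff.2 ⟨b⟩
  have hle : smoothChannel W η a b ≤ 1 :=
    (div_le_one (one_add_card_mul_pos hη.le)).2 (by nlinarith)
  linarith [logb_nonpos one_lt_two (smoothChannel_pos hW0 hη a b).le hle]

theorem neg_logb_smoothChannel_le (hW0 : ∀ a b, 0 ≤ W a b) (hη : 0 < η) (a : X) (b : Y) :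
    -logb 2 (smoothChannel W η a b) ≤ logb 2 (1 + Fintype.card Y * η) - logb 2 η := by
  have hden := one_add_card_mul_pos (Y := Y) hη.le
  have hmono : logb 2 (η / (1 + Fintype.card Y * η)) ≤ logb 2 (smoothChannel W η a b) :=
    logb_le_logb_of_le one_lt_two (by positivity)
      (div_le_div_of_nonneg_right (by linarith [hW0 a b]) hden.le)
  rw [logb_div hη.ne' hden.ne'] at hmono
  linarith

theorem mul_neg_logb_smoothChannel_le (hW0 : ∀ a b, 0 ≤ W a b) (hη : 0 < η) (a : X) (b : Y) :
    W a b * -logb 2 (smoothChannel W η a b) ≤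
      W a b * -logb 2 (W a b) + W a b * logb 2 (1 + Fintype.card Y * η) := by
  rcases (hW0 a b).eq_or_lt with h0 | hpos
  · simp [← h0]
  have hden := one_add_card_mul_pos (Y := Y) hη.le
  have hmono : logb 2 (W a b) ≤ logb 2 (W a b + η) :=
    logb_le_logb_of_le one_lt_two hpos (by linarith)
  rw [smoothChannel, logb_div (by linarith) hden.ne', ← mul_add]
  exact mul_le_mul_of_nonneg_left (by linarith) hpos.le

end SmoothChannel

theorem continuous_mul_logb (b : ℝ) : Continuous fun x => x * logb b x := by
  simpa only [logb, mul_div_assoc] using continuous_mul_log.div_const (log b)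

def typicalityPenalty (kx ky : ℕ) (δ : ℝ) : ℝ :=
  logb 2 (1 + ky * δ) + 2 * kx * ky * (δ * logb 2 (1 + ky * δ) - δ * logb 2 δ)

theorem tendsto_typicalityPenalty (kx ky : ℕ) :
    Tendsto (typicalityPenalty kx ky) (𝓝[>] 0) (𝓝 0) := by
  have hcont : ContinuousAt (typicalityPenalty kx ky) 0 := by
    have := (continuous_mul_logb 2).continuousAt (x := 0)
    unfold typicalityPenalty
    fun_prop (disch := norm_num)
  simpa [typicalityPenalty] using hcont.tendsto.mono_left nhdsWithin_le_nhds

section CrossEntropy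

variable {X Y : Type*} [Fintype X] [Fintype Y] {p : X → ℝ} {W : X → Y → ℝ}

theorem sum_sum_mul_neg_logb_smoothChannel_le (hp0 : ∀ a, 0 ≤ p a) (hp1 : ∑ a, p a = 1)
    (hW0 : ∀ a b, 0 ≤ W a b) (hW1 : ∀ a, ∑ b, W a b = 1) {η : ℝ} (hη : 0 < η) :
    ∑ a, ∑ b, p a * W a b * -logb 2 (smoothChannel W η a b) ≤
      condH p W + logb 2 (1 + Fintype.card Y * η) := by
  set L := logb 2 (1 + Fintype.card Y * η)
  calc ∑ a, ∑ b, p a * W a b * -logb 2 (smoothChannel W η a b)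
      = ∑ a, p a * ∑ b, W a b * -logb 2 (smoothChannel W η a b) := by
        simp only [Finset.mul_sum, mul_assoc]
    _ ≤ ∑ a, p a * ∑ b, (W a b * -logb 2 (W a b) + W a b * L) :=
        Finset.sum_le_sum fun a _ => mul_le_mul_of_nonneg_left (Finset.sum_le_sum fun b _ =>
          mul_neg_logb_smoothChannel_le hW0 hη a b) (hp0 a)
    _ = condH p W + L := by
        simp only [Finset.sum_add_distrib, ← Finset.sum_mul, hW1, one_mul, mul_add, hp1, condH,
          mul_neg, Finset.sum_neg_distrib]

theorem sum_mul_neg_logb_smoothChannel_le (hp0 : ∀ a, 0 ≤ p a) (hp1 : ∑ a, p a = 1)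
    (hW0 : ∀ a b, 0 ≤ W a b) (hW1 : ∀ a, ∑ b, W a b = 1) (q : X × Y → ℝ) (s : X → ℝ) {δ : ℝ}
    (hδ : 0 < δ) (hq : ∀ a b, |q (a, b) - s a * W a b| ≤ δ) (hs : ∀ a, |s a - p a| ≤ δ) :
    ∑ c, q c * -logb 2 (smoothChannel W δ c.1 c.2) ≤
      condH p W + typicalityPenalty (Fintype.card X) (Fintype.card Y) δ := by
  set L := logb 2 (1 + Fintype.card Y * δ) - logb 2 δ
  have hterm : ∀ a b, q (a, b) * -logb 2 (smoothChannel W δ a b) ≤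
      p a * W a b * -logb 2 (smoothChannel W δ a b) + 2 * δ * L := fun a b => by
    have hWle : W a b ≤ 1 :=
      hW1 a ▸ Finset.single_le_sum (fun b _ => hW0 a b) (Finset.mem_univ b)
    have hclose : |q (a, b) - p a * W a b| ≤ 2 * δ :=
      calc |q (a, b) - p a * W a b|
          ≤ |q (a, b) - s a * W a b| + |s a - p a| * W a b := by
            rw [← abs_of_nonneg (hW0 a b), ← abs_mul, abs_of_nonneg (hW0 a b)]
            exact (abs_sub_le _ _ _).trans_eq (by rw [sub_mul])
        _ ≤ δ + δ * 1 := add_le_add (hq a b) (mul_le_mul (hs a) hWle (hW0 a b) hδ.le)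
        _ = 2 * δ := by ring
    have hg0 := neg_logb_smoothChannel_nonneg hW0 hW1 hδ a b
    have hgL := neg_logb_smoothChannel_le hW0 hδ a b
    nlinarith [le_abs_self (q (a, b) - p a * W a b)]
  calc ∑ c, q c * -logb 2 (smoothChannel W δ c.1 c.2)
      ≤ ∑ a, ∑ b, (p a * W a b * -logb 2 (smoothChannel W δ a b) + 2 * δ * L) := by
        rw [Fintype.sum_prod_type]
        exact Finset.sum_le_sum fun a _ => Finset.sum_le_sum fun b _ => hterm a b
    _ ≤ condH p W + logb 2 (1 + Fintype.card Y * δ) +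
          Fintype.card X * Fintype.card Y * (2 * δ * L) := by
        simp only [Finset.sum_add_distrib, Finset.sum_const, Finset.card_univ, nsmul_eq_mul]
        linarith [sum_sum_mul_neg_logb_smoothChannel_le hp0 hp1 hW0 hW1 hδ]
    _ = condH p W + typicalityPenalty (Fintype.card X) (Fintype.card Y) δ := by
        rw [typicalityPenalty]; ring

end CrossEntropy

/-- Conditional typical set cardinality bound (Csiszár–Körner Lemma 1.2.13):
|Tⁿ_{W,δ}(x)| ≤ (n+1)^{|X|} 2^{n(H(W|p)+φ(|X|,|Y|,δ))} for x ∈ Tⁿ_{p,δ}. -/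
theorem stmt14 :
    ∃ φ : ℕ → ℕ → ℝ → ℝ,
      (∀ kx ky, Filter.Tendsto (fun δ => φ kx ky δ) (nhdsWithin 0 (Set.Ioi 0)) (nhds 0)) ∧
      ∀ (X Y : Type) [Fintype X] [Fintype Y] [DecidableEq X] [DecidableEq Y]
        (p : X → ℝ), ((∀ a, 0 ≤ p a) ∧ ∑ a, p a = 1) →
        ∀ W : X → Y → ℝ, (∀ a, (∀ b, 0 ≤ W a b) ∧ ∑ b, W a b = 1) →
        ∀ δ : ℝ, 0 < δ → δ < 1 / (2 * Fintype.card X) →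
        ∀ (n : ℕ) (x : Fin n → X),
          (∀ a, |typeOf x a - p a| ≤ δ ∧ (p a = 0 → typeOf x a = 0)) →
          ((Set.ncard {y : Fin n → Y |
              ∀ a b, |typeOf (fun i => (x i, y i)) (a, b) - typeOf x a * W a b| ≤ δ ∧
                (W a b = 0 → typeOf (fun i => (x i, y i)) (a, b) = 0)} : ℕ) : ℝ) ≤
            ((n : ℝ) + 1) ^ Fintype.card X *
              (2 : ℝ) ^ ((n : ℝ) * (condH p W + φ (Fintype.card X) (Fintype.card Y) δ)) := by
  refine ⟨typicalityPenalty, tendsto_typicalityPenalty, ?_⟩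
  intro X Y _ _ _ _ p ⟨hp0, hp1⟩ W hW δ hδ _ n x hx
  have hW0 a b : 0 ≤ W a b := (hW a).1 b
  have hW1 a : ∑ b, W a b = 1 := (hW a).2
  rw [Set.ncard_eq_toFinset_card']
  calc _ ≤ (2 : ℝ) ^ ((n : ℝ) * (condH p W + typicalityPenalty _ _ δ)) := by
        refine card_le_two_rpow_of_sum_neg_logb_le _ (smoothChannel_pos hW0 hδ)
          (sum_smoothChannel hW1 hδ.le) x _ _ fun y hy => ?_
        rw [Set.mem_toFinset] at hy
        rw [sum_comp_eq_mul_sum_typeOf (fun i => (x i, y i))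
          (fun c => -logb 2 (smoothChannel W δ c.1 c.2))]
        exact mul_le_mul_of_nonneg_left (sum_mul_neg_logb_smoothChannel_le hp0 hp1 hW0 hW1 _ _ hδ
          (fun a b => (hy a b).1) (fun a => (hx a).1)) n.cast_nonneg
    _ ≤ _ := le_mul_of_one_le_left (by positivity)
        (one_le_pow₀ (by linarith [n.cast_nonneg (α := ℝ)]))
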